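/- Distinct self-conjugate partitions of n are never adjacent in the partition graph G_n. Equivalently, the induced subgraph of G_n on the set Ax_n = {λ ⊢ n : λ = λ'} of self-conjugate partitions is edgeless. -/

import Mathlib

open Finset

/-- `P : ℕ → ℕ` (1-indexed, `P 0 = 0` by convention) is a partition of `n`:
weakly decreasing on positive indices, vanishing beyond `n`, with parts summing to `n`. -/
def IsPartition (n : ℕ) (P : ℕ → ℕ) : Prop :=
  (∀ i j : ℕ, 1 ≤ i → i ≤ j → P j ≤ P i) ∧
  (∀ i : ℕ, n < i → P i = 0) ∧
  P 0 = 0 ∧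
  (∑ i ∈ Finset.Icc 1 n, P i) = n

/-- The multiset of (positive) parts of `P`. -/
def partsOf (n : ℕ) (P : ℕ → ℕ) : Multiset ℕ :=
  ((Finset.Icc 1 n).val.map P).filter (fun x => 0 < x)

/-- `Q` arises from `P` by an elementary transfer: decrease one part `a` by 1,
increase a different part `b` (possibly a newly adjoined zero part, `b = 0`) by 1,
delete zero parts and reorder. -/
def Transfer (n : ℕ) (P Q : ℕ → ℕ) : Prop :=
  ∃ a b : ℕ, a ∈ partsOf n P ∧ (b ∈ (partsOf n P).erase a ∨ b = 0) ∧
    partsOf n Q =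
      Multiset.filter (fun x => 0 < x)
        ((a - 1) ::ₘ (b + 1) ::ₘ (((partsOf n P).erase a).erase b))

/-- Vertices of the partition graph: partitions of `n`. -/
def PartitionOf (n : ℕ) : Type := {P : ℕ → ℕ // IsPartition n P}

/-- The partition graph `G_n`: distinct partitions adjacent iff one is obtained
from the other by an elementary transfer. -/
def G (n : ℕ) : SimpleGraph (PartitionOf n) :=
  SimpleGraph.fromRel (fun P Q => Transfer n P.1 Q.1)

/-- The conjugate partition: `(conjFun n P) j = #{i ∈ [1,n] : P i ≥ j}` for `j ≥ 1`. -/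
def conjFun (n : ℕ) (P : ℕ → ℕ) : ℕ → ℕ := fun j =>
  if j = 0 then 0 else ((Finset.Icc 1 n).filter (fun i => j ≤ P i)).card

/-- The self-conjugate axis `Ax_n`. -/
def Ax (n : ℕ) : Set (PartitionOf n) := {P | ∀ j, P.1 j = conjFun n P.1 j}

/-- Graph distance from a vertex to a set of vertices. -/
noncomputable def dSet (n : ℕ) (P : PartitionOf n) (S : Set (PartitionOf n)) : ℕ :=
  sInf ((fun α => (G n).dist P α) '' S)

/-- The central region `C_n^{(r)}`. -/
def Creg (n r : ℕ) : Set (PartitionOf n) := {P | dSet n P (Ax n) ≤ r}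

/-- The thin spine `Sp_n`: the axis together with all common neighbors of
pairs of distinct axial vertices. -/
def Sp (n : ℕ) : Set (PartitionOf n) :=
  Ax n ∪ {ν | ∃ α β : PartitionOf n, α ∈ Ax n ∧ β ∈ Ax n ∧ α ≠ β ∧
    (G n).Adj ν α ∧ (G n).Adj ν β}

/-- The thick spine `Sp_n^{(r)}`. -/
def SpThick (n r : ℕ) : Set (PartitionOf n) := {P | dSet n P (Sp n) ≤ r}

/-- Ferrers diagram cells of `P` (contained in the `n × n` box for a partition of `n`). -/
def cells (n : ℕ) (P : ℕ → ℕ) : Finset (ℕ × ℕ) :=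
  (Finset.Icc 1 n ×ˢ Finset.Icc 1 n).filter (fun c => c.2 ≤ P c.1)

/-- A finite set of cells is a Ferrers diagram (a lower set of positive cells). -/
def IsDiagram (D : Finset (ℕ × ℕ)) : Prop :=
  ∀ p ∈ D, 1 ≤ p.1 ∧ 1 ≤ p.2 ∧
    ∀ q : ℕ × ℕ, 1 ≤ q.1 → 1 ≤ q.2 → q.1 ≤ p.1 → q.2 ≤ p.2 → q ∈ D

/-- `c` is a removable corner of `P`. -/
def Removable (n : ℕ) (P : ℕ → ℕ) (c : ℕ × ℕ) : Prop :=
  c ∈ cells n P ∧ IsDiagram (cells n P \ {c})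

/-- `c` is an addable corner of `P`. -/
def Addable (n : ℕ) (P : ℕ → ℕ) (c : ℕ × ℕ) : Prop :=
  1 ≤ c.1 ∧ 1 ≤ c.2 ∧ c ∉ cells n P ∧ IsDiagram (insert c (cells n P))

/-- Maximizer set of a vertex invariant. -/
def Argmax (n : ℕ) (I : PartitionOf n → ℝ) : Set (PartitionOf n) :=
  {P | ∀ Q, I Q ≤ I P}

/-- Axial concentration radius. -/
noncomputable def rhoAx (n : ℕ) (I : PartitionOf n → ℝ) : ℕ :=
  sInf {r : ℕ | Argmax n I ⊆ Creg n r}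

/-- Spinal concentration radius. -/
noncomputable def rhoSp (n : ℕ) (I : PartitionOf n → ℝ) : ℕ :=
  sInf {r : ℕ | Argmax n I ⊆ SpThick n r}

/-!
For a self-conjugate partition the parts are also the column lengths, so a transfer
`a ↦ a - 1`, `b ↦ b + 1` between self-conjugate partitions `P` and `Q` moves one cell of the
diagram from row `a` to row `b + 1`. Both diagrams are symmetric, so the transpose of the removed
cell is removed too and the transpose of the added cell is added too: both cells lie on the
diagonal, `P a = a` and `Q (b + 1) = b + 1`. This is incompatible with `P` and `Q` being weakly
decreasing.
-/

/-- Transposition invariance of the Ferrers diagram `{(i, j) : 1 ≤ i, 1 ≤ j ≤ R i}`. -/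
def TransposeInvariant (R : ℕ → ℕ) : Prop :=
  ∀ i j : ℕ, 1 ≤ i → 1 ≤ j → (j ≤ R i ↔ i ≤ R j)

lemma pos_of_mem_partsOf {n : ℕ} {R : ℕ → ℕ} {x : ℕ} (hx : x ∈ partsOf n R) : 0 < x :=
  (Multiset.mem_filter.mp hx).2

lemma countP_le_filter_pos (s : Multiset ℕ) {t : ℕ} (ht : 1 ≤ t) :
    (s.filter (0 < ·)).countP (t ≤ ·) = s.countP (t ≤ ·) := by
  rw [Multiset.countP_filter]
  exact Multiset.countP_congr rfl fun x _ => propext ⟨And.left, fun h => ⟨h, by omega⟩⟩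

lemma countP_le_partsOf (n : ℕ) (R : ℕ → ℕ) {t : ℕ} (ht : 1 ≤ t) :
    (partsOf n R).countP (t ≤ ·) = conjFun n R t := by
  rw [partsOf, conjFun, if_neg (by omega), countP_le_filter_pos _ ht, Multiset.countP_map,
    Finset.card_def, Finset.filter_val]

lemma le_conjFun_iff {n : ℕ} {R : ℕ → ℕ} (hR : IsPartition n R) {i j : ℕ} (hi : 1 ≤ i)
    (hj : 1 ≤ j) : i ≤ conjFun n R j ↔ j ≤ R i := by
  obtain ⟨hanti, hvan, -, -⟩ := hR
  rw [conjFun, if_neg (by omega)]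
  constructor
  · intro h
    by_contra hlt
    have hsub : (Icc 1 n).filter (fun r => j ≤ R r) ⊆ Icc 1 (i - 1) := by
      intro r hr
      simp only [mem_Icc, mem_filter] at hr ⊢
      have : ¬ i ≤ r := fun hir => hlt (hr.2.trans (hanti i r hi hir))
      omega
    have := card_le_card hsub
    simp only [Nat.card_Icc] at this
    omega
  · intro h
    have hin : i ≤ n := by
      by_contra hgt
      have := hvan i (by omega)
      omega
    have hsub : Icc 1 i ⊆ (Icc 1 n).filter (fun r => j ≤ R r) := by
      intro r hr
      simp only [mem_Icc, mem_filter] at hr ⊢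
      exact ⟨⟨hr.1, hr.2.trans hin⟩, h.trans (hanti r i hr.1 hr.2)⟩
    simpa only [Nat.card_Icc, add_tsub_cancel_right] using card_le_card hsub

lemma transposeInvariant_of_eq_conjFun {n : ℕ} {R : ℕ → ℕ} (hR : IsPartition n R)
    (hc : ∀ j, R j = conjFun n R j) : TransposeInvariant R := fun i j hi hj => by
  rw [hc j]
  exact (le_conjFun_iff hR hi hj).symm

lemma countP_le_erase_erase {s : Multiset ℕ} (hs : ∀ x ∈ s, 0 < x) {b t : ℕ}
    (hb : b ∈ s ∨ b = 0) (ht : 1 ≤ t) :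
    s.countP (t ≤ ·) = (s.erase b).countP (t ≤ ·) + if t ≤ b then 1 else 0 := by
  rcases hb with hb | rfl
  · conv_lhs => rw [← Multiset.cons_erase hb]
    rw [Multiset.countP_cons]
  · rw [Multiset.erase_of_notMem fun h => (hs 0 h).false, if_neg (by omega), add_zero]

lemma conjFun_add_of_transfer {n a b : ℕ} {P Q : ℕ → ℕ} (ha : a ∈ partsOf n P)
    (hb : b ∈ (partsOf n P).erase a ∨ b = 0)
    (hQ : partsOf n Q = ((a - 1) ::ₘ (b + 1) ::ₘ (((partsOf n P).erase a).erase b)).filter (0 < ·))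
    {t : ℕ} (ht : 1 ≤ t) :
    conjFun n Q t + (if t = a then 1 else 0) = conjFun n P t + (if t = b + 1 then 1 else 0) := by
  have hpos : ∀ x ∈ (partsOf n P).erase a, 0 < x :=
    fun x hx => pos_of_mem_partsOf (Multiset.mem_of_mem_erase hx)
  rw [← countP_le_partsOf n Q ht, ← countP_le_partsOf n P ht, hQ, countP_le_filter_pos _ ht,
    countP_le_erase_erase (fun x hx => pos_of_mem_partsOf hx) (Or.inl ha) ht,
    countP_le_erase_erase hpos hb ht, Multiset.countP_cons, Multiset.countP_cons]
  split_ifs <;> omega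

/-- The cell `(a, P a)` lies in `P` but not in `Q`, and so does its transpose; as row `a` is the
only row where the diagrams differ in this direction, the cell is diagonal. -/
lemma eq_self_of_unique_lt {P Q : ℕ → ℕ} (hP : TransposeInvariant P) (hQ : TransposeInvariant Q)
    {a : ℕ} (ha : 1 ≤ a) (hlt : Q a < P a) (huniq : ∀ t, Q t < P t → t = a) : P a = a := by
  have hpos : 1 ≤ P a := by omega
  apply huniq
  have hmem : a ≤ P (P a) := (hP a (P a) ha hpos).1 le_rfl
  have hnmem : ¬ a ≤ Q (P a) := fun h => by
    have := (hQ (P a) a hpos ha).1 h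
    omega
  omega

lemma eq_of_move_cell {P Q : ℕ → ℕ} (hPanti : ∀ i j, 1 ≤ i → i ≤ j → P j ≤ P i)
    (hQanti : ∀ i j, 1 ≤ i → i ≤ j → Q j ≤ Q i)
    (hP : TransposeInvariant P) (hQ : TransposeInvariant Q) {a c : ℕ} (ha : 1 ≤ a) (hc : 1 ≤ c)
    (hmove : ∀ t, Q t + (if t = a then 1 else 0) = P t + (if t = c then 1 else 0)) :
    P = Q := by
  rcases eq_or_ne a c with rfl | hac
  · funext t
    have := hmove t
    omega
  have hdrop : ∀ t, Q t < P t → t = a := fun t hlt => by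
    by_contra hta
    have := hmove t
    split_ifs at this <;> omega
  have hrise : ∀ t, P t < Q t → t = c := fun t hlt => by
    by_contra htc
    have := hmove t
    split_ifs at this <;> omega
  have hmove_a := hmove a
  have hmove_c := hmove c
  rw [if_pos rfl, if_neg hac] at hmove_a
  rw [if_pos rfl, if_neg hac.symm] at hmove_c
  have hPa : P a = a := eq_self_of_unique_lt hP hQ ha (by omega) hdrop
  have hQc : Q c = c := eq_self_of_unique_lt hQ hP hc (by omega) hrise
  rcases hac.lt_or_gt with hlt | hgt
  · have := hQanti a c ha hlt.le
    omega
  · have := hPanti c a hc hgt.le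
    omega

lemma eq_of_transfer {n : ℕ} {P Q : ℕ → ℕ} (hP : IsPartition n P) (hQ : IsPartition n Q)
    (hPc : ∀ j, P j = conjFun n P j) (hQc : ∀ j, Q j = conjFun n Q j) (hT : Transfer n P Q) :
    P = Q := by
  obtain ⟨a, b, ha, hb, hQparts⟩ := hT
  have ha1 : 1 ≤ a := pos_of_mem_partsOf ha
  refine eq_of_move_cell hP.1 hQ.1 (transposeInvariant_of_eq_conjFun hP hPc)
    (transposeInvariant_of_eq_conjFun hQ hQc) ha1 (Nat.le_add_left 1 b) fun t => ?_
  rcases Nat.eq_zero_or_pos t with rfl | ht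
  · rw [hP.2.2.1, hQ.2.2.1, if_neg (by omega), if_neg (by omega)]
  · rw [hPc t, hQc t]
    exact conjFun_add_of_transfer ha hb hQparts ht

theorem axis_edgeless_general (n : ℕ) (P Q : PartitionOf n)
    (hP : P ∈ Ax n) (hQ : Q ∈ Ax n) :
    ¬ (G n).Adj P Q := by
  rintro ⟨hne, hT | hT⟩
  · exact hne (Subtype.ext (eq_of_transfer P.2 Q.2 hP hQ hT))
  · exact hne (Subtype.ext (eq_of_transfer Q.2 P.2 hQ hP hT).symm)

/-- Distinct self-conjugate partitions are never adjacent in `G_n`: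
the induced subgraph on the axis is edgeless. -/
theorem axis_edgeless (n : ℕ) (hn : 1 ≤ n) (P Q : PartitionOf n)
    (hP : P ∈ Ax n) (hQ : Q ∈ Ax n) (hne : P ≠ Q) :
    ¬ (G n).Adj P Q :=
  axis_edgeless_general n P Q hP hQ
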